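/- Every column of W_0 indexed by a genotype of degree at most 1 is itself an additive fitness landscape; consequently, the set of additive fitness landscapes equals the span of the columns of W_0 (equivalently W_a) indexed by genotypes of degree ≤ 1. -/

import Mathlib

def wronOmega {m : ℕ} [NeZero m] (x y : Fin m) : ℝ :=
  if x ≠ 0 ∧ x = y then 1 else 0

def wronMu {m : ℕ} [NeZero m] (x y : Fin m) : ℝ :=
  if x = 0 ∨ y = 0 then 1 else if x = y then -1 else 0

def Wa {n : ℕ} (m : Fin n → ℕ) [∀ i, NeZero (m i)] :
    Matrix (∀ i, Fin (m i)) (∀ i, Fin (m i)) ℝ :=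
  fun g h => ∏ i, (1 - (m i : ℝ) * wronOmega (g i) (h i))

def W0 {n : ℕ} (m : Fin n → ℕ) [∀ i, NeZero (m i)] :
    Matrix (∀ i, Fin (m i)) (∀ i, Fin (m i)) ℝ :=
  fun g h => ∏ i, wronMu (g i) (h i)

def deg {n : ℕ} {m : Fin n → ℕ} [∀ i, NeZero (m i)] (g : ∀ i, Fin (m i)) : ℕ :=
  (Finset.univ.filter fun i => g i ≠ 0).card

def IsAdditive {n : ℕ} {m : Fin n → ℕ} [∀ i, NeZero (m i)]
    (v : (∀ i, Fin (m i)) → ℝ) : Prop :=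
  ∃ φ : (i : Fin n) → Fin (m i) → ℝ, ∀ g, v g = ∑ i, φ i (g i)

/-!
Since `μ(x, 0) = 1` and `ω(x, 0) = 0`, the column of `W₀` or `Wₐ` at a genotype supported on a
single locus `j` is a function of `h j` alone, hence additive. Conversely, at each locus the
single-locus columns, viewed as functions on `Fin (m j)`, span every function there: they contain
the constant `1` and determine each indicator `δ_b` (for `W₀` via `μ(·, b) = δ₀ - δ_b` and
`∑_b (δ₀ - δ_b) = m j • δ₀ - 1`). An additive landscape is a sum of single-locus functions.
-/

open Submodule

theorem Submodule.eq_top_of_one_mem_of_single_mem {R ι : Type*} [Ring R] [Fintype ι]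
    [DecidableEq ι] {p : Submodule R (ι → R)} (i₀ : ι) (h1 : 1 ∈ p)
    (hsingle : ∀ i ≠ i₀, Pi.single i 1 ∈ p) : p = ⊤ := by
  have hsum : (Pi.single i₀ 1 : ι → R) + ∑ i ∈ Finset.univ.erase i₀, Pi.single i 1 = 1 := by
    rw [Finset.add_sum_erase _ (fun i => (Pi.single i 1 : ι → R)) (Finset.mem_univ i₀)]
    exact Finset.univ_sum_single (1 : ι → R)
  have hall : ∀ i, (Pi.single i 1 : ι → R) ∈ p := by
    intro i
    rcases eq_or_ne i i₀ with rfl | hi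
    · rw [eq_sub_of_add_eq hsum]
      exact sub_mem h1 (sum_mem fun j hj => hsingle j (Finset.ne_of_mem_erase hj))
    · exact hsingle i hi
  rw [eq_top_iff, ← (Pi.basisFun R ι).span_eq, span_le]
  rintro _ ⟨i, rfl⟩
  simpa using hall i

section SingleLocus

variable {k : ℕ} [NeZero k]

@[simp]
theorem wronMu_zero_right (x : Fin k) : wronMu x 0 = 1 := by
  simp [wronMu]

@[simp]
theorem wronOmega_zero_right (x : Fin k) : wronOmega x 0 = 0 := by
  simp [wronOmega]

theorem wronMu_left_eq_sub_single {a : Fin k} (ha : a ≠ 0) :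
    (fun x => wronMu x a) = Pi.single 0 1 - Pi.single a 1 := by
  funext x
  rcases eq_or_ne x 0 with rfl | hx
  · simp [wronMu, ha.symm]
  · rcases eq_or_ne x a with rfl | hxa
    · simp [wronMu, hx]
    · simp [wronMu, hx, ha, hxa]

theorem wronOmega_left_eq_single {a : Fin k} (ha : a ≠ 0) :
    (fun x => wronOmega x a) = Pi.single a 1 := by
  funext x
  by_cases hx : x = a <;> simp [wronOmega, hx, ha]

theorem span_range_wronMu_eq_top :
    span ℝ (Set.range fun a : Fin k => fun x => wronMu x a) = ⊤ := by
  set p := span ℝ (Set.range fun a : Fin k => fun x => wronMu x a)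
  have hcol : ∀ a, (fun x => wronMu x a) ∈ p := fun a => subset_span ⟨a, rfl⟩
  have h1 : (1 : Fin k → ℝ) ∈ p := by simpa [← Pi.one_def] using hcol 0
  have hdiff : ∀ a, (Pi.single 0 1 : Fin k → ℝ) - Pi.single a 1 ∈ p := by
    intro a
    rcases eq_or_ne a 0 with rfl | ha
    · simp
    · simpa [wronMu_left_eq_sub_single ha] using hcol a
  have hk : (k : ℝ) ≠ 0 := Nat.cast_ne_zero.2 (NeZero.ne k)
  have hsum :
      ∑ a, ((Pi.single 0 1 : Fin k → ℝ) - Pi.single a 1) = (k : ℝ) • Pi.single 0 1 - 1 := by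
    have hone : ∑ a, (Pi.single a 1 : Fin k → ℝ) = 1 := Finset.univ_sum_single (1 : Fin k → ℝ)
    rw [Finset.sum_sub_distrib, hone, Finset.sum_const, Finset.card_univ, Fintype.card_fin,
      ← Nat.cast_smul_eq_nsmul ℝ]
  have h0 : (Pi.single 0 1 : Fin k → ℝ) ∈ p := by
    have hmem : (k : ℝ) • (Pi.single 0 1 : Fin k → ℝ) ∈ p := by
      rw [← sub_add_cancel ((k : ℝ) • _) 1, ← hsum]
      exact add_mem (sum_mem fun a _ => hdiff a) h1
    simpa [hk] using p.smul_mem (k : ℝ)⁻¹ hmem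
  refine eq_top_of_one_mem_of_single_mem 0 h1 fun a _ => ?_
  simpa using sub_mem h0 (hdiff a)

theorem span_range_wronOmega_eq_top :
    span ℝ (Set.range fun a : Fin k => fun x => 1 - (k : ℝ) * wronOmega x a) = ⊤ := by
  set p := span ℝ (Set.range fun a : Fin k => fun x => 1 - (k : ℝ) * wronOmega x a)
  have hcol : ∀ a, (fun x => 1 - (k : ℝ) * wronOmega x a) ∈ p := fun a => subset_span ⟨a, rfl⟩
  have h1 : (1 : Fin k → ℝ) ∈ p := by simpa [← Pi.one_def] using hcol 0
  have hk : (k : ℝ) ≠ 0 := Nat.cast_ne_zero.2 (NeZero.ne k)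
  refine eq_top_of_one_mem_of_single_mem 0 h1 fun a ha => ?_
  have hsub : 1 - (fun x => 1 - (k : ℝ) * wronOmega x a) = (k : ℝ) • Pi.single a 1 := by
    rw [← wronOmega_left_eq_single ha]
    funext x
    simp
  simpa [hsub, hk] using p.smul_mem (k : ℝ)⁻¹ (sub_mem h1 (hcol a))

end SingleLocus

section Landscape

variable {n : ℕ} {m : Fin n → ℕ}

variable (m) in
def liftLocus (j : Fin n) : (Fin (m j) → ℝ) →ₗ[ℝ] ((∀ i, Fin (m i)) → ℝ) :=
  LinearMap.funLeft ℝ ℝ (Function.eval j)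

@[simp]
theorem liftLocus_apply (j : Fin n) (f : Fin (m j) → ℝ) (g : ∀ i, Fin (m i)) :
    liftLocus m j f g = f (g j) :=
  rfl

variable [∀ i, NeZero (m i)]

theorem isAdditive_iff_mem_iSup_range_liftLocus {v : (∀ i, Fin (m i)) → ℝ} :
    IsAdditive v ↔ v ∈ ⨆ j, LinearMap.range (liftLocus m j) := by
  constructor
  · rintro ⟨φ, hφ⟩
    have hv : v = ∑ j, liftLocus m j (φ j) := funext fun g => by simp [hφ]
    rw [hv]
    exact sum_mem fun j _ => mem_iSup_of_mem j (LinearMap.mem_range_self _ _)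
  · intro hv
    induction hv using iSup_induction' with
    | mem j _ hf =>
      obtain ⟨f, rfl⟩ := hf
      refine ⟨Pi.single j f, fun g => ?_⟩
      rw [Finset.sum_eq_single j (fun i _ hij => by simp [Pi.single_eq_of_ne hij]) (by simp)]
      simp
    | zero => exact ⟨0, by simp⟩
    | add u w _ _ hu hw =>
      obtain ⟨φ, hφ⟩ := hu
      obtain ⟨ψ, hψ⟩ := hw
      exact ⟨φ + ψ, fun g => by simp [hφ, hψ, Finset.sum_add_distrib]⟩

theorem deg_le_one_iff {g : ∀ i, Fin (m i)} :
    deg g ≤ 1 ↔ ∀ i, g i ≠ 0 → ∀ j, g j ≠ 0 → i = j := by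
  simp [deg, Finset.card_le_one]

theorem setOf_deg_le_one [NeZero n] :
    {g : ∀ i, Fin (m i) | deg g ≤ 1} = ⋃ j, Set.range (Pi.single j) := by
  ext g
  simp only [Set.mem_ofPred_eq, Set.mem_iUnion, Set.mem_range, deg_le_one_iff]
  constructor
  · intro hg
    by_cases hzero : ∀ i, g i = 0
    · exact ⟨0, 0, by ext i; simp [hzero]⟩
    · push Not at hzero
      obtain ⟨j, hj⟩ := hzero
      refine ⟨j, g j, funext fun i => ?_⟩
      rcases eq_or_ne i j with rfl | hij
      · simp
      · rw [Pi.single_eq_of_ne hij]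
        by_contra hi
        exact hij (hg i (Ne.symm hi) j hj)
  · rintro ⟨j, a, rfl⟩
    have hsupp : ∀ i, (Pi.single j a : ∀ i, Fin (m i)) i ≠ 0 → i = j := fun i hi =>
      by_contra fun hij => hi (by simp [hij])
    exact fun i hi i' hi' => (hsupp i hi).trans (hsupp i' hi').symm

theorem span_image_deg_le_one_eq_iSup [NeZero n]
    (col : (∀ i, Fin (m i)) → (∀ i, Fin (m i)) → ℝ) (c : ∀ j, Fin (m j) → Fin (m j) → ℝ)
    (hcol : ∀ j a, col (Pi.single j a) = liftLocus m j (c j a))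
    (hc : ∀ j, span ℝ (Set.range (c j)) = ⊤) :
    span ℝ (col '' {g | deg g ≤ 1}) = ⨆ j, LinearMap.range (liftLocus m j) := by
  rw [setOf_deg_le_one, Set.image_iUnion, span_iUnion]
  refine iSup_congr fun j => ?_
  rw [← Set.range_comp, show col ∘ Pi.single j = liftLocus m j ∘ c j from funext (hcol j),
    Set.range_comp, span_image, hc, Submodule.map_top]

theorem W0_single (j : Fin n) (a : Fin (m j)) :
    (fun h => W0 m h (Pi.single j a)) = liftLocus m j fun x => wronMu x a := by
  funext h
  rw [W0, liftLocus_apply]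
  exact (Fintype.prod_eq_single j fun i hij => by simp [hij]).trans (by simp)

theorem Wa_single (j : Fin n) (a : Fin (m j)) :
    (fun h => Wa m h (Pi.single j a)) = liftLocus m j fun x => 1 - (m j : ℝ) * wronOmega x a := by
  funext h
  rw [Wa, liftLocus_apply]
  exact (Fintype.prod_eq_single j fun i hij => by simp [hij]).trans (by simp)

end Landscape

theorem additive_eq_lowDegree_span {n : ℕ} (hn : 1 ≤ n) (m : Fin n → ℕ)
    [∀ i, NeZero (m i)] :
    (∀ g : ∀ i, Fin (m i), deg g ≤ 1 → IsAdditive (fun h => W0 m h g)) ∧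
    {v : (∀ i, Fin (m i)) → ℝ | IsAdditive v} =
      ↑(Submodule.span ℝ ((fun g => fun h => W0 m h g) '' {g | deg g ≤ 1})) ∧
    {v : (∀ i, Fin (m i)) → ℝ | IsAdditive v} =
      ↑(Submodule.span ℝ ((fun g => fun h => Wa m h g) '' {g | deg g ≤ 1})) := by
  have : NeZero n := ⟨by omega⟩
  have hadd : {v : (∀ i, Fin (m i)) → ℝ | IsAdditive v} = ⨆ j, LinearMap.range (liftLocus m j) :=
    Set.ext fun _ => isAdditive_iff_mem_iSup_range_liftLocus
  have hW0 := span_image_deg_le_one_eq_iSup (fun g h => W0 m h g) _ (W0_single (m := m))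
    fun _ => span_range_wronMu_eq_top
  have hWa := span_image_deg_le_one_eq_iSup (fun g h => Wa m h g) _ (Wa_single (m := m))
    fun _ => span_range_wronOmega_eq_top
  refine ⟨fun g hg => ?_, by rw [hadd, hW0], by rw [hadd, hWa]⟩
  change (fun h => W0 m h g) ∈ {v | IsAdditive v}
  rw [hadd, ← hW0]
  exact subset_span ⟨g, hg, rfl⟩
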